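/- The elements u_1, …, u_m of M_n(ℂ)^{⊗(m+1)} are unitary, pairwise commute (u_s · u_t = u_t · u_s for all s, t), and satisfy u_s^n = 1 for every s = 1,…,m. -/

import Mathlib

open Matrix Kronecker

noncomputable section

/-- The primitive `n`-th root of unity `exp(2πi/n)`. -/
def omega (n : ℕ) : ℂ := Complex.exp (2 * Real.pi * Complex.I / n)

/-- The diagonal matrix unit `e_i` with a `1` in entry `(i,i)`. -/
def eM (n : ℕ) (i : Fin n) : Matrix (Fin n) (Fin n) ℂ := Matrix.single i i 1

/-- The cyclic shift matrix `w`, with `w(a,b) = 1` iff `b = a + 1` (mod `n`). -/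
def wM (n : ℕ) [NeZero n] : Matrix (Fin n) (Fin n) ℂ :=
  Matrix.of fun a b => if b = a + 1 then 1 else 0

/-- The spectral projections `f_k = (1/n) Σ_j ω^{-jk} w^j` of `w`. -/
def fM (n : ℕ) [NeZero n] (k : Fin n) : Matrix (Fin n) (Fin n) ℂ :=
  ((n : ℂ))⁻¹ • ∑ j : Fin n, (omega n ^ ((j : ℕ) * (k : ℕ)))⁻¹ • wM n ^ (j : ℕ)

/-- The normalized trace of a square matrix: the trace divided by the size. -/
def nτ {ι : Type*} [Fintype ι] (A : Matrix ι ι ℂ) : ℂ :=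
  Matrix.trace A / (Fintype.card ι)

/-- The `N`-fold elementary tensor `A_0 ⊗ ⋯ ⊗ A_{N-1}` of `n × n` matrices,
realized as a matrix indexed by functions `Fin N → Fin n`. -/
def tens (n N : ℕ) (A : Fin N → Matrix (Fin n) (Fin n) ℂ) :
    Matrix (Fin N → Fin n) (Fin N → Fin n) ℂ :=
  Matrix.of fun x y => ∏ k, A k (x k) (y k)

/-- `u_s = 1^{⊗(s-1)} ⊗ v ⊗ 1^{⊗…}` where `v = Σ_i w^i ⊗ f_i` occupies factors
`s-1` and `s` of the `N`-fold tensor power. -/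
def uM (n N : ℕ) [NeZero n] (s : ℕ) : Matrix (Fin N → Fin n) (Fin N → Fin n) ℂ :=
  ∑ i : Fin n, tens n N fun k =>
    if (k : ℕ) + 1 = s then wM n ^ (i : ℕ)
    else if (k : ℕ) = s then fM n i
    else 1

/-- `U_m = u_1 u_2 ⋯ u_m` inside the `N`-fold tensor power. -/
def UM (n N m : ℕ) [NeZero n] : Matrix (Fin N → Fin n) (Fin N → Fin n) ℂ :=
  (((List.range m).map fun s => uM n N (s + 1))).prod

/-- `F_r = f_r ⊗ 1 ⊗ ⋯ ⊗ 1` inside the `N`-fold tensor power. -/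
def FM (n N : ℕ) [NeZero n] (r : Fin n) : Matrix (Fin N → Fin n) (Fin N → Fin n) ℂ :=
  tens n N fun k => if (k : ℕ) = 0 then fM n r else 1

/-- `E(i) = e_{i_1} ⊗ ⋯ ⊗ e_{i_m} ⊗ 1 ⊗ ⋯ ⊗ 1` inside the `N`-fold tensor power,
with the `e`'s occupying factors `0, …, m-1`. -/
def EM (n N m : ℕ) (i : Fin m → Fin n) : Matrix (Fin N → Fin n) (Fin N → Fin n) ℂ :=
  tens n N fun k => if h : (k : ℕ) < m then eM n (i ⟨(k : ℕ), h⟩) else 1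

/-!
The shift `w` satisfies `w ^ n = 1`, and `f_k = (1/n) ∑_j (ω^{-k} w)^j` is the average of the
powers of `ω^{-k} w`, so `w f_k = ω^k f_k`. Orthogonality of the characters `j ↦ ω^{jk}` then makes
the `f_k` complete orthogonal idempotents, self-adjoint because `ω^{-k} w` is unitary.
Writing `u_s = ∑_i a_i e_i` with `a_i = w^i` in factor `s - 1` and `e_i = f_i` in factor `s`,
the `a_i` are unitaries commuting with every `e_j`, hence
`u_s u_s^* = ∑_i a_i a_i^* e_i = ∑_i e_i = 1` and `u_s^n = ∑_i a_i^n e_i = 1`.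
Every tensor factor of every `u_s` lies in the commutative algebra `ℂ[w]`, so the `u_s` commute.
-/

open Finset

section PowAverage

variable (𝕜 : Type*) {R : Type*} [Field 𝕜] [Ring R] [Algebra 𝕜 R]

def powAverage (n : ℕ) (x : R) : R := (n : 𝕜)⁻¹ • ∑ j ∈ range n, x ^ j

variable {𝕜} {n : ℕ}

theorem powAverage_eq_ite [DecidableEq 𝕜] {c : 𝕜} (hn : (n : 𝕜) ≠ 0) (hc : c ^ n = 1) :
    powAverage 𝕜 n c = if c = 1 then 1 else 0 := by
  unfold powAverage
  split_ifs with h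
  · simp [h, hn]
  · simp [geom_sum_eq h, hc]

theorem mul_geom_sum_of_pow_eq_one {x : R} (hx : x ^ n = 1) :
    x * ∑ j ∈ range n, x ^ j = ∑ j ∈ range n, x ^ j := by
  have h := mul_neg_geom_sum x n
  rw [hx, sub_self, sub_mul, one_mul, sub_eq_zero] at h
  exact h.symm

theorem mul_powAverage {x : R} (hx : x ^ n = 1) : x * powAverage 𝕜 n x = powAverage 𝕜 n x := by
  rw [powAverage, mul_smul_comm, mul_geom_sum_of_pow_eq_one hx]

theorem powAverage_mul_of_mul_eq_smul {x q : R} {c : 𝕜} (h : x * q = c • q) :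
    powAverage 𝕜 n x * q = powAverage 𝕜 n c • q := by
  have hpow : ∀ j : ℕ, x ^ j * q = c ^ j • q := by
    intro j
    induction j with
    | zero => simp
    | succ j ih => rw [pow_succ', mul_assoc, ih, mul_smul_comm, h, smul_smul, pow_succ]
  simp only [powAverage, smul_mul_assoc, sum_mul, hpow, smul_eq_mul, mul_smul, sum_smul]

theorem isSelfAdjoint_powAverage [StarRing 𝕜] [StarRing R] [StarModule 𝕜 R] {x : R}
    (hn : (n : 𝕜) ≠ 0) (hxu : x ∈ unitary R) (hx : x ^ n = 1) :
    IsSelfAdjoint (powAverage 𝕜 n x) := by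
  rw [powAverage]
  set S := ∑ j ∈ range n, x ^ j
  have hxS : x * S = S := mul_geom_sum_of_pow_eq_one hx
  have hstarS : ∀ j : ℕ, star x ^ j * S = S := by
    intro j
    induction j with
    | zero => simp
    | succ j ih =>
      rw [pow_succ, mul_assoc, ← hxS, ← mul_assoc (star x), Unitary.star_mul_self_of_mem hxu,
        one_mul, hxS, ih]
  -- `star x` fixes `S`, so `S` is proportional to the self-adjoint `star S * S`.
  have hS : S = (n : 𝕜)⁻¹ • (star S * S) := by
    simp only [S, star_sum, star_pow, sum_mul, hstarS, sum_const, card_range]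
    rw [← Nat.cast_smul_eq_nsmul 𝕜, smul_smul, inv_mul_cancel₀ hn, one_smul]
  rw [hS, smul_smul]
  exact ((IsSelfAdjoint.natCast n).inv₀.mul (IsSelfAdjoint.natCast n).inv₀ |>.smul
    (IsSelfAdjoint.star_mul_self S))

end PowAverage

section OrthogonalIdempotents

variable {R ι : Type*} [Semiring R] [Fintype ι] {e : ι → R}

theorem OrthogonalIdempotents.sum_mul_mul_sum_mul (he : OrthogonalIdempotents e) (a b : ι → R)
    (hb : ∀ i j, Commute (e i) (b j)) :
    (∑ i, a i * e i) * ∑ i, b i * e i = ∑ i, a i * b i * e i := by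
  classical
  rw [sum_mul_sum]
  refine sum_congr rfl fun i _ => ?_
  have hswap : ∀ j, a i * e i * (b j * e j) = a i * b j * (e i * e j) := fun j => by
    rw [mul_assoc, ← mul_assoc (e i), (hb i j).eq]; simp only [mul_assoc]
  simp [hswap, he.mul_eq]

theorem CompleteOrthogonalIdempotents.sum_mul_pow (he : CompleteOrthogonalIdempotents e)
    (a : ι → R) (ha : ∀ i j, Commute (e i) (a j)) (p : ℕ) :
    (∑ i, a i * e i) ^ p = ∑ i, a i ^ p * e i := by
  induction p with
  | zero => simp [he.complete]
  | succ p ih =>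
    rw [pow_succ, ih, he.toOrthogonalIdempotents.sum_mul_mul_sum_mul _ _ ha]
    simp only [pow_succ]

theorem CompleteOrthogonalIdempotents.sum_mul_mem_unitary [StarRing R]
    (he : CompleteOrthogonalIdempotents e) (he_sa : ∀ i, IsSelfAdjoint (e i)) {a : ι → R}
    (ha : ∀ i, a i ∈ unitary R) (hae : ∀ i j, Commute (e i) (a j)) :
    ∑ i, a i * e i ∈ unitary R := by
  have hae' : ∀ i j, Commute (e i) (star (a j)) := fun i j => by
    simpa only [(he_sa i).star_eq] using (hae i j).star_star
  have hstar : star (∑ i, a i * e i) = ∑ i, star (a i) * e i := by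
    simp only [star_sum, star_mul, (he_sa _).star_eq, (hae' _ _).eq]
  rw [Unitary.mem_iff, hstar, he.toOrthogonalIdempotents.sum_mul_mul_sum_mul _ _ hae,
    he.toOrthogonalIdempotents.sum_mul_mul_sum_mul _ _ hae']
  simp [Unitary.star_mul_self_of_mem (ha _), Unitary.mul_star_self_of_mem (ha _), he.complete]

end OrthogonalIdempotents

theorem commute_of_mem_adjoin_singleton {R A : Type*} [CommSemiring R] [Semiring A]
    [Algebra R A] {a b c : A} (hb : b ∈ Algebra.adjoin R {a}) (hc : c ∈ Algebra.adjoin R {a}) :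
    Commute b c :=
  Algebra.commute_of_mem_adjoin_of_forall_mem_commute hc <| by
    simpa using (Algebra.commute_of_mem_adjoin_self hb).symm

section CyclicShift

variable {n : ℕ}

theorem omega_ne_zero : omega n ≠ 0 := Complex.exp_ne_zero _

variable [NeZero n]

theorem wM_eq_permMatrix : wM n = (Equiv.addRight (1 : Fin n)).permMatrix ℂ := by
  ext a b
  simp [wM, PEquiv.toMatrix_apply, eq_comm]

theorem wM_mem_unitary : wM n ∈ unitary (Matrix (Fin n) (Fin n) ℂ) := by
  rw [Unitary.mem_iff, wM_eq_permMatrix, star_eq_conjTranspose, conjTranspose_permMatrix,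
    ← permMatrix_mul, ← permMatrix_mul, mul_inv_cancel, inv_mul_cancel, permMatrix_one]
  exact ⟨rfl, rfl⟩

theorem wM_pow_card : wM n ^ n = 1 := by
  have hpow : ∀ p : ℕ, (Equiv.addRight (1 : Fin n) ^ p).permMatrix ℂ = wM n ^ p := by
    intro p
    induction p with
    | zero => simp
    | succ p ih => rw [pow_succ', permMatrix_mul, ih, wM_eq_permMatrix, pow_succ]
  have hcard : Equiv.addRight (1 : Fin n) ^ n = 1 := by
    have h : n • (1 : Fin n) = 0 := by simpa using card_nsmul_eq_zero (G := Fin n) (x := 1)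
    simp [h]
  rw [← hpow, hcard, permMatrix_one]

theorem isPrimitiveRoot_omega : IsPrimitiveRoot (omega n) n :=
  Complex.isPrimitiveRoot_exp n (NeZero.ne n)

theorem omega_pow_inj {k l : Fin n} : omega n ^ (k : ℕ) = omega n ^ (l : ℕ) ↔ k = l :=
  ⟨fun h => Fin.ext (isPrimitiveRoot_omega.pow_inj k.isLt l.isLt h), fun h => h ▸ rfl⟩

theorem omega_pow_eq_one_iff (k : Fin n) : omega n ^ (k : ℕ) = 1 ↔ k = 0 := by
  rw [isPrimitiveRoot_omega.pow_eq_one_iff_dvd, Fin.ext_iff, Fin.val_zero]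
  exact ⟨fun h => Nat.eq_zero_of_dvd_of_lt h k.isLt, fun h => h ▸ dvd_zero n⟩

theorem omega_pow_pow_card (a : ℕ) : (omega n ^ a) ^ n = 1 := by
  rw [← pow_mul, mul_comm, pow_mul, isPrimitiveRoot_omega.pow_eq_one, one_pow]

theorem fM_eq_powAverage (k : Fin n) :
    fM n k = powAverage ℂ n ((omega n ^ (k : ℕ))⁻¹ • wM n) := by
  rw [fM, powAverage, Fin.sum_univ_eq_sum_range (fun j => (omega n ^ (j * k))⁻¹ • wM n ^ j)]
  simp only [smul_pow, inv_pow, ← pow_mul, mul_comm]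

theorem wM_mul_fM (k : Fin n) : wM n * fM n k = omega n ^ (k : ℕ) • fM n k := by
  have hx : ((omega n ^ (k : ℕ))⁻¹ • wM n) ^ n = 1 := by
    rw [smul_pow, inv_pow, omega_pow_pow_card, wM_pow_card, inv_one, one_smul]
  have h := mul_powAverage (𝕜 := ℂ) hx
  rw [← fM_eq_powAverage, smul_mul_assoc] at h
  exact (inv_smul_eq_iff₀ (pow_ne_zero _ omega_ne_zero)).mp h

end CyclicShift

section SpectralProjections

variable {n : ℕ} [NeZero n]

theorem fM_mul_fM (k l : Fin n) : fM n k * fM n l = if k = l then fM n l else 0 := by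
  have hx : (omega n ^ (k : ℕ))⁻¹ • wM n * fM n l
      = ((omega n ^ (k : ℕ))⁻¹ * omega n ^ (l : ℕ)) • fM n l := by
    rw [smul_mul_assoc, wM_mul_fM, smul_smul]
  have hc : ((omega n ^ (k : ℕ))⁻¹ * omega n ^ (l : ℕ)) ^ n = 1 := by
    rw [mul_pow, inv_pow, omega_pow_pow_card, omega_pow_pow_card, inv_one, one_mul]
  have hc1 : (omega n ^ (k : ℕ))⁻¹ * omega n ^ (l : ℕ) = 1 ↔ k = l := by
    rw [inv_mul_eq_one₀ (pow_ne_zero _ omega_ne_zero), omega_pow_inj]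
  rw [fM_eq_powAverage k, powAverage_mul_of_mul_eq_smul hx,
    powAverage_eq_ite (NeZero.ne (n : ℂ)) hc]
  simp only [hc1, ite_smul, one_smul, zero_smul]

theorem sum_fM : ∑ k, fM n k = 1 := by
  have hcoeff : ∀ j : Fin n, (n : ℂ)⁻¹ * ∑ k : Fin n, (omega n ^ ((j : ℕ) * k))⁻¹
      = if j = 0 then 1 else 0 := by
    intro j
    have h := powAverage_eq_ite (𝕜 := ℂ) (n := n) (c := (omega n ^ (j : ℕ))⁻¹)
      (NeZero.ne (n : ℂ)) (by rw [inv_pow, omega_pow_pow_card, inv_one])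
    simpa only [powAverage, ← Fin.sum_univ_eq_sum_range, inv_eq_one, omega_pow_eq_one_iff,
      smul_eq_mul, inv_pow, ← pow_mul] using h
  simp only [fM, ← smul_sum]
  rw [sum_comm]
  simp only [← sum_smul]
  rw [smul_sum]
  simp only [smul_smul, hcoeff, ite_smul, one_smul, zero_smul, sum_ite_eq', mem_univ, if_true,
    Fin.val_zero, pow_zero]

theorem completeOrthogonalIdempotents_fM : CompleteOrthogonalIdempotents (fM n) :=
  CompleteOrthogonalIdempotents.iff_ortho_complete.mpr
    ⟨fun k l hkl => (fM_mul_fM k l).trans (if_neg hkl), sum_fM⟩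

theorem isSelfAdjoint_fM (k : Fin n) : IsSelfAdjoint (fM n k) := by
  have hunit : ((omega n ^ (k : ℕ))⁻¹ • wM n) ∈ unitary (Matrix (Fin n) (Fin n) ℂ) := by
    refine Unitary.smul_mem_of_mem ?_ wM_mem_unitary
    rw [Unitary.mem_iff_star_mul_self, RCLike.star_def, RCLike.conj_mul, norm_inv, norm_pow,
      isPrimitiveRoot_omega.norm'_eq_one (NeZero.ne n)]
    simp
  rw [fM_eq_powAverage]
  exact isSelfAdjoint_powAverage (NeZero.ne (n : ℂ)) hunit
    (by rw [smul_pow, inv_pow, omega_pow_pow_card, wM_pow_card, inv_one, one_smul])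

theorem fM_mem_adjoin (k : Fin n) : fM n k ∈ Algebra.adjoin ℂ {wM n} :=
  Subalgebra.smul_mem _ (Subalgebra.sum_mem _ fun _ _ =>
    Subalgebra.smul_mem _ (Subalgebra.pow_mem _ (Algebra.self_mem_adjoin_singleton ℂ _) _) _) _

end SpectralProjections

section TensorPower

variable {n N : ℕ}

theorem tens_mul (A B : Fin N → Matrix (Fin n) (Fin n) ℂ) :
    tens n N (A * B) = tens n N A * tens n N B := by
  ext x y
  simp only [tens, mul_apply, of_apply, Pi.mul_apply]
  rw [prod_univ_sum]
  exact sum_congr rfl fun z _ => prod_mul_distrib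

theorem tens_one : tens n N 1 = 1 := by
  ext x y
  simp [tens, one_apply, prod_boole, funext_iff]

theorem star_tens (A : Fin N → Matrix (Fin n) (Fin n) ℂ) :
    star (tens n N A) = tens n N (star A) := by
  ext x y
  simp [tens, star_prod]

theorem Commute.tens {A B : Fin N → Matrix (Fin n) (Fin n) ℂ} (h : Commute A B) :
    Commute (tens n N A) (tens n N B) := by
  rw [Commute, SemiconjBy, ← tens_mul, ← tens_mul, h.eq]

theorem tens_mulSingle_apply (k : Fin N) (A : Matrix (Fin n) (Fin n) ℂ) (x y : Fin N → Fin n) :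
    tens n N (Pi.mulSingle k A) x y
      = A (x k) (y k) * ∏ j ∈ {k}ᶜ, (1 : Matrix (Fin n) (Fin n) ℂ) (x j) (y j) := by
  rw [tens, of_apply, Fintype.prod_eq_mul_prod_compl k, Pi.mulSingle_eq_same]
  congr 1
  exact prod_congr rfl fun j hj => by rw [Pi.mulSingle_eq_of_ne (by simpa using hj)]

def tensSingle (k : Fin N) :
    Matrix (Fin n) (Fin n) ℂ →⋆ₐ[ℂ] Matrix (Fin N → Fin n) (Fin N → Fin n) ℂ where
  toFun A := tens n N (Pi.mulSingle k A)
  map_one' := by rw [Pi.mulSingle_one, tens_one]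
  map_mul' A B := by rw [← tens_mul, Pi.mulSingle_mul]
  map_zero' := by ext x y; simp [tens_mulSingle_apply]
  map_add' A B := by ext x y; simp [tens_mulSingle_apply, add_mul]
  commutes' c := by
    simp only [Algebra.algebraMap_eq_smul_one]
    ext x y
    rw [tens_mulSingle_apply, Matrix.smul_apply, ← tens_one, ← Pi.mulSingle_one k,
      Matrix.smul_apply, tens_mulSingle_apply]
    simp [mul_assoc]
  map_star' A := by rw [star_tens, Pi.star_mulSingle]

theorem tensSingle_apply (k : Fin N) (A : Matrix (Fin n) (Fin n) ℂ) :
    tensSingle k A = tens n N (Pi.mulSingle k A) :=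
  rfl

theorem commute_tensSingle {a b : Fin N} (hab : a ≠ b) (A B : Matrix (Fin n) (Fin n) ℂ) :
    Commute (tensSingle a A) (tensSingle b B) := by
  rw [tensSingle_apply, tensSingle_apply]
  exact (Pi.mulSingle_commute (f := fun _ => Matrix (Fin n) (Fin n) ℂ) hab A B).tens

end TensorPower

section Generators

variable {n N s : ℕ} [NeZero n]

theorem uM_eq_sum (hs0 : s ≠ 0) (hs : s < N) :
    uM n N s = ∑ i : Fin n,
      tensSingle ⟨s - 1, by omega⟩ (wM n ^ (i : ℕ)) * tensSingle ⟨s, hs⟩ (fM n i) := by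
  refine sum_congr rfl fun i _ => ?_
  rw [tensSingle_apply, tensSingle_apply, ← tens_mul]
  congr 1
  funext k
  simp only [Pi.mul_apply, Pi.mulSingle_apply, Fin.ext_iff]
  split_ifs <;> first | omega | simp

theorem completeOrthogonalIdempotents_tensSingle_fM (b : Fin N) :
    CompleteOrthogonalIdempotents fun i => tensSingle b (fM n i) :=
  completeOrthogonalIdempotents_fM.map (tensSingle b).toRingHom

theorem uM_mem_unitary (hs0 : s ≠ 0) (hs : s < N) :
    uM n N s ∈ unitary (Matrix (Fin N → Fin n) (Fin N → Fin n) ℂ) := by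
  have hab : (⟨s - 1, by omega⟩ : Fin N) ≠ ⟨s, hs⟩ := by simp [Fin.ext_iff]; omega
  rw [uM_eq_sum hs0 hs]
  exact (completeOrthogonalIdempotents_tensSingle_fM _).sum_mul_mem_unitary
    (fun i => (isSelfAdjoint_fM i).map _) (fun i => Unitary.map_mem _ (pow_mem wM_mem_unitary _))
    (fun i j => commute_tensSingle hab.symm _ _)

theorem uM_pow_card (hs0 : s ≠ 0) (hs : s < N) : uM n N s ^ n = 1 := by
  have hab : (⟨s - 1, by omega⟩ : Fin N) ≠ ⟨s, hs⟩ := by simp [Fin.ext_iff]; omega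
  have he := completeOrthogonalIdempotents_tensSingle_fM (n := n) ⟨s, hs⟩
  have hpow : ∀ i : Fin n, tensSingle (⟨s - 1, by omega⟩ : Fin N) (wM n ^ (i : ℕ)) ^ n = 1 :=
    fun i => by rw [← map_pow, ← pow_mul, mul_comm, pow_mul, wM_pow_card, one_pow, map_one]
  rw [uM_eq_sum hs0 hs, he.sum_mul_pow _ fun i j => commute_tensSingle hab.symm _ _]
  simp only [hpow, one_mul]
  exact he.complete

theorem commute_uM (s t : ℕ) : Commute (uM n N s) (uM n N t) := by
  have hmem : ∀ (r : ℕ) (i : Fin n) (k : Fin N),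
      (if (k : ℕ) + 1 = r then wM n ^ (i : ℕ) else if (k : ℕ) = r then fM n i else 1)
        ∈ Algebra.adjoin ℂ {wM n} := by
    intro r i k
    split_ifs
    · exact Subalgebra.pow_mem _ (Algebra.self_mem_adjoin_singleton ℂ _) _
    · exact fM_mem_adjoin i
    · exact Subalgebra.one_mem _
  exact Commute.sum_left _ _ _ fun i _ => Commute.sum_right _ _ _ fun j _ =>
    Commute.tens <| funext fun k => (commute_of_mem_adjoin_singleton (hmem s i k) (hmem t j k)).eq

end Generators

theorem statement13_general (n : ℕ) [NeZero n] (m : ℕ) :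
    (∀ s : ℕ, 1 ≤ s → s ≤ m →
        uM n (m + 1) s * (uM n (m + 1) s)ᴴ = 1 ∧ (uM n (m + 1) s)ᴴ * uM n (m + 1) s = 1) ∧
      (∀ s t : ℕ, 1 ≤ s → s ≤ m → 1 ≤ t → t ≤ m →
        uM n (m + 1) s * uM n (m + 1) t = uM n (m + 1) t * uM n (m + 1) s) ∧
      (∀ s : ℕ, 1 ≤ s → s ≤ m → uM n (m + 1) s ^ n = 1) := by
  refine ⟨fun s hs1 hsm => ?_, fun s t _ _ _ _ => (commute_uM s t).eq,
    fun s hs1 hsm => uM_pow_card (by omega) (by omega)⟩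
  have hu := uM_mem_unitary (n := n) (N := m + 1) (s := s) (by omega) (by omega)
  exact ⟨Unitary.mul_star_self_of_mem hu, Unitary.star_mul_self_of_mem hu⟩

/-- the elements `u_1, …, u_m` of `M_n(ℂ)^{⊗(m+1)}` are unitary, pairwise
commute, and each satisfies `u_s^n = 1`. -/
theorem statement13 (n : ℕ) [NeZero n] (hn : 2 ≤ n) (m : ℕ) :
    (∀ s : ℕ, 1 ≤ s → s ≤ m →
        uM n (m + 1) s * (uM n (m + 1) s)ᴴ = 1 ∧ (uM n (m + 1) s)ᴴ * uM n (m + 1) s = 1) ∧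
      (∀ s t : ℕ, 1 ≤ s → s ≤ m → 1 ≤ t → t ≤ m →
        uM n (m + 1) s * uM n (m + 1) t = uM n (m + 1) t * uM n (m + 1) s) ∧
      (∀ s : ℕ, 1 ≤ s → s ≤ m → uM n (m + 1) s ^ n = 1) :=
  statement13_general n m
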